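/- For every pair s = (s¹, s²) of vectors in ℂ⁴, the Minkowski square of the Dirac current equals the square of the scalar bilinear: Σ_μ κ_s^μ κ_{s,μ} = μ_s². -/

import Mathlib

open Matrix

noncomputable section

/-- The mostly-minus Minkowski metric η = diag(1,−1,−1,−1,−1) (equal to its own inverse). -/
def eta (μ ν : Fin 5) : ℂ := if μ = ν then (if μ = 0 then 1 else -1) else 0

/-- Γ_{μν} := (1/2)(Γ_μ Γ_ν − Γ_ν Γ_μ). -/
def comm2 (Γ : Fin 5 → Matrix (Fin 4) (Fin 4) ℂ) (μ ν : Fin 5) : Matrix (Fin 4) (Fin 4) ℂ :=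
  (1/2 : ℂ) • (Γ μ * Γ ν - Γ ν * Γ μ)

/-- s̄₁ s₂ := s₁ᵀ C s₂. -/
def bil (Cm : Matrix (Fin 4) (Fin 4) ℂ) (s₁ s₂ : Fin 4 → ℂ) : ℂ := s₁ ⬝ᵥ Cm *ᵥ s₂

/-- s̄₁ M s₂ := s₁ᵀ C M s₂. -/
def bilM (Cm M : Matrix (Fin 4) (Fin 4) ℂ) (s₁ s₂ : Fin 4 → ℂ) : ℂ := s₁ ⬝ᵥ Cm *ᵥ M *ᵥ s₂

/-- The 2×2 symplectic form ε with ε_{12} = 1 (indices 0,1 standing for 1,2). -/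
def eps2 (A B : Fin 2) : ℂ := if A = 0 ∧ B = 1 then 1 else if A = 1 ∧ B = 0 then -1 else 0

/-- The scalar bilinear μ_s := ε_{AB} s̄ᴬ sᴮ. -/
def muS (Cm : Matrix (Fin 4) (Fin 4) ℂ) (s : Fin 2 → Fin 4 → ℂ) : ℂ :=
  ∑ A, ∑ B, eps2 A B * bil Cm (s A) (s B)

/-- The Dirac current with lowered index, κ_{s,μ} := ε_{AB} s̄ᴬ Γ_μ sᴮ. -/
def kappaLow (Γ : Fin 5 → Matrix (Fin 4) (Fin 4) ℂ) (Cm : Matrix (Fin 4) (Fin 4) ℂ)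
    (s : Fin 2 → Fin 4 → ℂ) (μ : Fin 5) : ℂ :=
  ∑ A, ∑ B, eps2 A B * bilM Cm (Γ μ) (s A) (s B)

/-- The Dirac current with raised index, κ_s^μ := η^{μμ} κ_{s,μ} = ε_{AB} s̄ᴬ Γ^μ sᴮ. -/
def kappaUp (Γ : Fin 5 → Matrix (Fin 4) (Fin 4) ℂ) (Cm : Matrix (Fin 4) (Fin 4) ℂ)
    (s : Fin 2 → Fin 4 → ℂ) (μ : Fin 5) : ℂ :=
  eta μ μ * kappaLow Γ Cm s μ

/-- The 2-form bilinears ω^{AB}_{μν} := s̄ᴬ Γ_{μν} sᴮ. -/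
def omegaS (Γ : Fin 5 → Matrix (Fin 4) (Fin 4) ℂ) (Cm : Matrix (Fin 4) (Fin 4) ℂ)
    (s : Fin 2 → Fin 4 → ℂ) (A B : Fin 2) (μ ν : Fin 5) : ℂ :=
  bilM Cm (comm2 Γ μ ν) (s A) (s B)

lemma eta_off {μ ν : Fin 5} (h : μ ≠ ν) : eta μ ν = 0 := if_neg h
lemma eta_diag_sq (μ : Fin 5) : eta μ μ * eta μ μ = 1 := by
  fin_cases μ <;> norm_num [eta, Fin.ext_iff]
lemma eta_diag_ne (μ : Fin 5) : eta μ μ ≠ 0 := by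
  fin_cases μ <;> norm_num [eta, Fin.ext_iff]

lemma eqzC {a : ℂ} (h : a = -a) : a = 0 := by linear_combination (1/2 : ℂ) * h

variable (Γ : Fin 5 → Matrix (Fin 4) (Fin 4) ℂ)

section TraceLemmas
variable (hC : ∀ μ ν, Γ μ * Γ ν + Γ ν * Γ μ = (2 * eta μ ν) • (1 : Matrix (Fin 4) (Fin 4) ℂ))
include hC

lemma gsq (μ : Fin 5) : Γ μ * Γ μ = eta μ μ • 1 := by
  have h := hC μ μ
  rw [mul_smul] at h
  refine smul_right_injective _ (by norm_num : (2:ℂ) ≠ 0) ?_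
  show (2:ℂ) • (Γ μ * Γ μ) = (2:ℂ) • (eta μ μ • (1 : Matrix (Fin 4) (Fin 4) ℂ))
  rw [two_smul]; exact h

lemma ganti {μ ν : Fin 5} (h : μ ≠ ν) : Γ μ * Γ ν = -(Γ ν * Γ μ) := by
  have h1 := hC μ ν
  rw [eta_off h] at h1
  simp only [mul_zero, zero_smul] at h1
  exact eq_neg_of_add_eq_zero_left h1

lemma trG (μ : Fin 5) : trace (Γ μ) = 0 := by
  obtain ⟨ν, hν⟩ : ∃ ν, ν ≠ μ := by
    have : ∀ μ : Fin 5, ∃ ν, ν ≠ μ := by decide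
    exact this μ
  have h1 : trace (Γ ν * Γ μ * Γ ν) = eta ν ν * trace (Γ μ) := by
    rw [trace_mul_comm, ← mul_assoc, gsq Γ hC, smul_mul_assoc, one_mul, trace_smul, smul_eq_mul]
  have h2 : Γ ν * Γ μ * Γ ν = -(eta ν ν • Γ μ) := by
    rw [ganti Γ hC hν, neg_mul, mul_assoc, gsq Γ hC, mul_smul_comm, mul_one]
  rw [h2, trace_neg, trace_smul, smul_eq_mul] at h1
  have h3 : eta ν ν * trace (Γ μ) = 0 := eqzC (by linear_combination -h1)
  exact (mul_eq_zero.mp h3).resolve_left (eta_diag_ne ν)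

end TraceLemmas

lemma swap_head {A B X : Matrix (Fin 4) (Fin 4) ℂ} (h : A * B = -(B * A)) :
    A * (B * X) = -(B * (A * X)) := by
  rw [← mul_assoc, h, neg_mul, mul_assoc]

section TraceLemmas2
variable (hC : ∀ μ ν, Γ μ * Γ ν + Γ ν * Γ μ = (2 * eta μ ν) • (1 : Matrix (Fin 4) (Fin 4) ℂ))
include hC

lemma trGG (μ ν : Fin 5) : trace (Γ μ * Γ ν) = 4 * eta μ ν := by
  by_cases h : μ = ν
  · subst h
    rw [gsq Γ hC, trace_smul, trace_one, smul_eq_mul]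
    norm_num [mul_comm]
  · rw [eta_off h, mul_zero]
    have h1 : trace (Γ μ * Γ ν) = -(trace (Γ μ * Γ ν)) := by
      nth_rewrite 1 [ganti Γ hC h, trace_neg, trace_mul_comm]
      rfl
    exact eqzC h1

lemma trG3 {μ ν ρ : Fin 5} (h1 : μ ≠ ν) (h2 : μ ≠ ρ) (h3 : ν ≠ ρ) :
    trace (Γ μ * Γ ν * Γ ρ) = 0 := by
  obtain ⟨σ, hs1, hs2, hs3⟩ : ∃ σ, σ ≠ μ ∧ σ ≠ ν ∧ σ ≠ ρ := by
    revert h1 h2 h3; revert μ ν ρ; decide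
  set T := Γ μ * Γ ν * Γ ρ with hT
  have e1 : trace (Γ σ * (T * Γ σ)) = eta σ σ * trace T := by
    rw [trace_mul_comm, mul_assoc, gsq Γ hC, mul_smul_comm, mul_one, trace_smul, smul_eq_mul]
  have e2 : Γ σ * (T * Γ σ) = -(eta σ σ • T) := by
    have : T * Γ σ = Γ μ * (Γ ν * (Γ ρ * Γ σ)) := by rw [hT]; noncomm_ring
    rw [this, swap_head (ganti Γ hC hs1), swap_head (ganti Γ hC hs2),
      swap_head (ganti Γ hC hs3), gsq Γ hC]
    simp only [hT, mul_neg, neg_neg, mul_smul_comm, mul_one, mul_assoc]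
  rw [e2, trace_neg, trace_smul, smul_eq_mul] at e1
  have h4 : eta σ σ * trace T = 0 := eqzC (by linear_combination -e1)
  exact (mul_eq_zero.mp h4).resolve_left (eta_diag_ne σ)

lemma trG4 {μ ν ρ τ : Fin 5} (h1 : μ ≠ ν) (h2 : μ ≠ ρ) (h3 : μ ≠ τ)
    (h4 : ν ≠ ρ) (h5 : ν ≠ τ) (h6 : ρ ≠ τ) :
    trace (Γ μ * Γ ν * Γ ρ * Γ τ) = 0 := by
  have e0 : trace (Γ μ * Γ ν * Γ ρ * Γ τ) = trace (Γ τ * (Γ μ * (Γ ν * Γ ρ))) := by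
    rw [trace_mul_comm]; congr 1; noncomm_ring
  have e2 : Γ τ * (Γ μ * (Γ ν * Γ ρ)) = -(Γ μ * Γ ν * Γ ρ * Γ τ) := by
    rw [swap_head (ganti Γ hC h3.symm), swap_head (ganti Γ hC h5.symm),
      show Γ τ * Γ ρ = -(Γ ρ * Γ τ) from ganti Γ hC h6.symm]
    simp only [mul_neg, neg_neg, neg_inj]
    noncomm_ring
  rw [e2, trace_neg] at e0
  exact eqzC e0

end TraceLemmas2

abbrev PairIdx := {p : Fin 5 × Fin 5 // p.1 < p.2}
abbrev BIdx := Unit ⊕ Fin 5 ⊕ PairIdx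

def bfam (Γ : Fin 5 → Matrix (Fin 4) (Fin 4) ℂ) : BIdx → Matrix (Fin 4) (Fin 4) ℂ
  | .inl _ => 1
  | .inr (.inl μ) => Γ μ
  | .inr (.inr p) => Γ p.1.1 * Γ p.1.2

lemma card_BIdx : Fintype.card BIdx = 16 := by decide

section Gram
variable (hC : ∀ μ ν, Γ μ * Γ ν + Γ ν * Γ μ = (2 * eta μ ν) • (1 : Matrix (Fin 4) (Fin 4) ℂ))
include hC

/-- trace (Γa Γb (Γa Γd)) = 0 when a,b,d distinct -/
lemma tr4_ac {a b d : Fin 5} (hab : a ≠ b) (hbd : b ≠ d) :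
    trace (Γ a * Γ b * (Γ a * Γ d)) = 0 := by
  have e : Γ a * Γ b * (Γ a * Γ d) = -((Γ a * Γ a) * (Γ b * Γ d)) := by
    calc Γ a * Γ b * (Γ a * Γ d) = Γ a * (Γ b * (Γ a * Γ d)) := by rw [mul_assoc]
      _ = Γ a * (-(Γ a * (Γ b * Γ d))) := by rw [swap_head (ganti Γ hC hab.symm)]
      _ = -((Γ a * Γ a) * (Γ b * Γ d)) := by rw [mul_neg, mul_assoc]
  rw [e, trace_neg, gsq Γ hC, smul_mul_assoc, one_mul, trace_smul, trGG Γ hC, eta_off hbd]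
  simp

/-- trace (Γx Γy (Γy Γz)) = 0 when x ≠ z -/
lemma tr4_mid {x z : Fin 5} (y : Fin 5) (hxz : x ≠ z) :
    trace (Γ x * Γ y * (Γ y * Γ z)) = 0 := by
  have e : Γ x * Γ y * (Γ y * Γ z) = eta y y • (Γ x * Γ z) := by
    calc Γ x * Γ y * (Γ y * Γ z) = Γ x * ((Γ y * Γ y) * Γ z) := by noncomm_ring
      _ = eta y y • (Γ x * Γ z) := by
          rw [gsq Γ hC, smul_mul_assoc, one_mul, mul_smul_comm]
  rw [e, trace_smul, trGG Γ hC, eta_off hxz]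
  simp

/-- trace (Γa Γb (Γc Γb)) = 0 when a,b,c distinct -/
lemma tr4_bd {a b c : Fin 5} (hcb : c ≠ b) (hac : a ≠ c) :
    trace (Γ a * Γ b * (Γ c * Γ b)) = 0 := by
  have e : Γ a * Γ b * (Γ c * Γ b) = -(eta b b • (Γ a * Γ c)) := by
    calc Γ a * Γ b * (Γ c * Γ b) = Γ a * (Γ b * (Γ c * Γ b)) := by rw [mul_assoc]
      _ = Γ a * (-(Γ c * (Γ b * Γ b))) := by rw [swap_head (ganti Γ hC hcb.symm)]
      _ = -(Γ a * (Γ c * (Γ b * Γ b))) := by rw [mul_neg]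
      _ = -(eta b b • (Γ a * Γ c)) := by
          rw [gsq Γ hC, mul_smul_comm, mul_smul_comm, mul_one]
  rw [e, trace_neg, trace_smul, trGG Γ hC, eta_off hac]
  simp

lemma gram_offdiag : ∀ i j : BIdx, i ≠ j → trace (bfam Γ i * bfam Γ j) = 0 := by
  have base : ∀ μ (p : PairIdx), trace (Γ μ * (Γ p.1.1 * Γ p.1.2)) = 0 := by
    rintro μ ⟨⟨a, b⟩, hab⟩
    simp only
    by_cases h1 : μ = a
    · subst h1
      rw [← mul_assoc, gsq Γ hC, smul_mul_assoc, one_mul, trace_smul, trG Γ hC]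
      simp
    · by_cases h2 : μ = b
      · subst h2
        rw [trace_mul_comm, mul_assoc, gsq Γ hC, mul_smul_comm, mul_one, trace_smul, trG Γ hC]
        simp
      · rw [← mul_assoc]
        exact trG3 Γ hC h1 h2 (ne_of_lt hab)
  rintro (⟨⟩ | μ | ⟨⟨a, b⟩, hab⟩) (⟨⟩ | ν | ⟨⟨c, d⟩, hcd⟩) hij
  · exact absurd rfl hij
  · simpa [bfam] using trG Γ hC ν
  · have := trGG Γ hC c d
    simp only [bfam, one_mul]
    rw [trGG Γ hC, eta_off (ne_of_lt hcd), mul_zero]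
  · simpa [bfam] using trG Γ hC μ
  · have hμν : μ ≠ ν := by simpa using hij
    simp only [bfam]
    rw [trGG Γ hC, eta_off hμν, mul_zero]
  · exact base μ ⟨⟨c, d⟩, hcd⟩
  · simp only [bfam]
    rw [trace_mul_comm, one_mul]
    rw [trGG Γ hC, eta_off (ne_of_lt hab), mul_zero]
  · simp only [bfam]
    rw [trace_mul_comm]
    exact base ν ⟨⟨a, b⟩, hab⟩
  · -- pair/pair
    simp only [bfam]
    have hne : ¬(a = c ∧ b = d) := by
      intro ⟨h1, h2⟩; subst h1; subst h2; exact hij rfl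
    have hab' : a ≠ b := ne_of_lt hab
    have hcd' : c ≠ d := ne_of_lt hcd
    by_cases h1 : a = c
    · subst h1
      have hbd : b ≠ d := fun h => hne ⟨rfl, h⟩
      exact tr4_ac Γ hC hab' hbd
    · by_cases h2 : b = d
      · subst h2
        exact tr4_bd Γ hC (fun h => hcd' h) h1
      · by_cases h3 : a = d
        · subst h3
          have hcb : c ≠ b := by
            intro h; subst h; exact absurd (lt_trans hcd hab) (lt_irrefl _)
          rw [trace_mul_comm]
          exact tr4_mid Γ hC a hcb
        · by_cases h4 : b = c
          · subst h4
            exact tr4_mid Γ hC b h3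
          · rw [← mul_assoc]
            exact trG4 Γ hC hab' h1 h3 (fun h => h4 h) h2 hcd'

lemma gram_diag : ∀ i : BIdx, trace (bfam Γ i * bfam Γ i) ≠ 0 := by
  rintro (⟨⟩ | μ | ⟨⟨a, b⟩, hab⟩)
  · simp [bfam, trace_one]
  · simp only [bfam]
    rw [trGG Γ hC]
    simp [mul_eq_zero, eta_diag_ne μ]
  · simp only [bfam]
    have hab' : a ≠ b := ne_of_lt hab
    have e : Γ a * Γ b * (Γ a * Γ b) = -((eta a a * eta b b) • 1) := by
      calc Γ a * Γ b * (Γ a * Γ b) = Γ a * (Γ b * (Γ a * Γ b)) := by rw [mul_assoc]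
        _ = Γ a * (-(Γ a * (Γ b * Γ b))) := by rw [swap_head (ganti Γ hC hab'.symm)]
        _ = -((Γ a * Γ a) * (Γ b * Γ b)) := by rw [mul_neg, mul_assoc]
        _ = -((eta a a * eta b b) • 1) := by
            rw [gsq Γ hC, gsq Γ hC, smul_mul_assoc, one_mul, smul_smul]
    rw [e, trace_neg, trace_smul, trace_one]
    simp only [smul_eq_mul, ne_eq, neg_eq_zero, mul_eq_zero]
    push_neg
    exact ⟨⟨eta_diag_ne a, eta_diag_ne b⟩, by norm_num⟩

end Gram

lemma trace_std_mul (M : Matrix (Fin 4) (Fin 4) ℂ) (i j : Fin 4) :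
    trace (Matrix.single j i 1 * M) = M i j := by
  simp [Matrix.trace, Matrix.diag, Matrix.mul_apply, Matrix.single, ite_and]

lemma matrix_eq_zero_of_traces
    (hC : ∀ μ ν, Γ μ * Γ ν + Γ ν * Γ μ = (2 * eta μ ν) • (1 : Matrix (Fin 4) (Fin 4) ℂ))
    (D : Matrix (Fin 4) (Fin 4) ℂ)
    (h1 : trace D = 0) (h2 : ∀ μ, trace (Γ μ * D) = 0)
    (h3 : ∀ p : PairIdx, trace (Γ p.1.1 * Γ p.1.2 * D) = 0) : D = 0 := by
  have li : LinearIndependent ℂ (bfam Γ) := by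
    rw [Fintype.linearIndependent_iff]
    intro g hg i
    have h0 := congrArg (fun M => trace (bfam Γ i * M)) hg
    simp only [Matrix.mul_sum, Matrix.mul_smul, trace_sum, trace_smul, Matrix.mul_zero,
      trace_zero, smul_eq_mul] at h0
    rw [Finset.sum_eq_single i] at h0
    · exact (mul_eq_zero.mp h0).resolve_right (gram_diag Γ hC i)
    · intro j _ hji
      rw [gram_offdiag Γ hC i j (Ne.symm hji), mul_zero]
    · intro h; exact absurd (Finset.mem_univ i) h
  have hspan : Submodule.span ℂ (Set.range (bfam Γ)) = ⊤ := by
    refine li.span_eq_top_of_card_eq_finrank ?_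
    rw [card_BIdx, Module.finrank_matrix]
    simp
  let φ : Matrix (Fin 4) (Fin 4) ℂ →ₗ[ℂ] ℂ :=
    { toFun := fun M => trace (M * D)
      map_add' := fun x y => by rw [add_mul, trace_add]
      map_smul' := fun c x => by rw [smul_mul_assoc, trace_smul]; rfl }
  have hker : Set.range (bfam Γ) ⊆ (LinearMap.ker φ : Set _) := by
    rintro _ ⟨i, rfl⟩
    rcases i with ⟨⟩ | μ | p
    · show trace ((1 : Matrix (Fin 4) (Fin 4) ℂ) * D) = 0
      rw [one_mul]; exact h1
    · exact h2 μ
    · exact h3 p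
  have hle : (⊤ : Submodule ℂ (Matrix (Fin 4) (Fin 4) ℂ)) ≤ LinearMap.ker φ := by
    rw [← hspan]; exact Submodule.span_le.mpr hker
  have hall : ∀ M, trace (M * D) = 0 := fun M => hle Submodule.mem_top
  ext i j
  have := hall (Matrix.single j i 1)
  rw [trace_std_mul] at this
  simpa using this

lemma trG3' (hC : ∀ μ ν, Γ μ * Γ ν + Γ ν * Γ μ = (2 * eta μ ν) • (1 : Matrix (Fin 4) (Fin 4) ℂ))
    {a b : Fin 5} (μ : Fin 5) (hab : a ≠ b) : trace (Γ a * Γ b * Γ μ) = 0 := by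
  by_cases h1 : μ = a
  · subst h1
    rw [trace_mul_comm, ← mul_assoc, gsq Γ hC, smul_mul_assoc, one_mul, trace_smul, trG Γ hC]
    simp
  · by_cases h2 : μ = b
    · subst h2
      rw [mul_assoc, gsq Γ hC, mul_smul_comm, trace_smul, mul_one, trG Γ hC]
      simp
    · exact trG3 Γ hC hab (fun h => h1 h.symm) (fun h => h2 h.symm)

section FinalHelpers

lemma antisym_bil {M : Matrix (Fin 4) (Fin 4) ℂ} (hM : Mᵀ = -M) (x y : Fin 4 → ℂ) :
    y ⬝ᵥ M *ᵥ x = -(x ⬝ᵥ M *ᵥ y) := by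
  rw [Matrix.dotProduct_mulVec, ← Matrix.mulVec_transpose, hM, Matrix.neg_mulVec,
    neg_dotProduct, dotProduct_comm]

lemma antisym_bil_self {M : Matrix (Fin 4) (Fin 4) ℂ} (hM : Mᵀ = -M) (x : Fin 4 → ℂ) :
    x ⬝ᵥ M *ᵥ x = 0 :=
  eqzC (antisym_bil hM x x)

lemma trace_mul_vecMulVec (M : Matrix (Fin 4) (Fin 4) ℂ) (v w : Fin 4 → ℂ) :
    trace (M * vecMulVec v w) = w ⬝ᵥ (M *ᵥ v) := by
  simp [Matrix.trace, Matrix.diag, Matrix.mul_apply, Matrix.vecMulVec, dotProduct, Matrix.mulVec,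
    Finset.mul_sum, Finset.sum_mul]
  congr 1; ext a; congr 1; ext b; ring

lemma vecMulVec_sandwich (a b c d : Fin 4 → ℂ) (M : Matrix (Fin 4) (Fin 4) ℂ) :
    vecMulVec a b * M * vecMulVec c d = (b ⬝ᵥ M *ᵥ c) • vecMulVec a d := by
  ext i j
  simp [Matrix.mul_apply, Matrix.vecMulVec, dotProduct, Matrix.mulVec,
    Finset.mul_sum, Finset.sum_mul]
  rw [Finset.sum_comm]
  congr 1; ext k; congr 1; ext l; ring

lemma vecMulVec_transp (a b : Fin 4 → ℂ) : (vecMulVec a b)ᵀ = vecMulVec b a := by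
  ext i j; simp [Matrix.vecMulVec, mul_comm]

lemma trace_sym_antisym {S X : Matrix (Fin 4) (Fin 4) ℂ} (hS : Sᵀ = S) (hX : Xᵀ = -X) :
    trace (S * X) = 0 := by
  refine eqzC ?_
  conv_lhs => rw [← trace_transpose, transpose_mul, hS, hX, neg_mul, trace_neg, trace_mul_comm]

lemma smul_one_entry (x : ℂ) : (x • (1 : Matrix (Fin 4) (Fin 4) ℂ)) 0 0 = x := by
  simp

end FinalHelpers

/-- The Minkowski square of the Dirac current equals the square of the scalar bilinear:
    Σ_μ κ_s^μ κ_{s,μ} = μ_s². -/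
theorem kappa_square (Γ : Fin 5 → Matrix (Fin 4) (Fin 4) ℂ)
    (Cm : Matrix (Fin 4) (Fin 4) ℂ)
    (hC : ∀ μ ν, Γ μ * Γ ν + Γ ν * Γ μ = (2 * eta μ ν) • (1 : Matrix (Fin 4) (Fin 4) ℂ))
    (hvol : Γ 0 * Γ 1 * Γ 2 * Γ 3 * Γ 4 = 1)
    (hCt : Cmᵀ = -Cm)
    (hCΓ : ∀ μ, Cm * Γ μ = (Γ μ)ᵀ * Cm)
    (s : Fin 2 → Fin 4 → ℂ) :
    ∑ μ, kappaUp Γ Cm s μ * kappaLow Γ Cm s μ = (muS Cm s) ^ 2 := by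
  set u := s 0 with hu
  set v := s 1 with hv
  set m := u ⬝ᵥ Cm *ᵥ v with hm
  set X := vecMulVec v u - vecMulVec u v with hX
  set N := X * Cm with hN
  set κ := fun μ => kappaLow Γ Cm s μ with hκ
  -- antisymmetry of C Γ μ
  have hCG : ∀ μ, (Cm * Γ μ)ᵀ = -(Cm * Γ μ) := by
    intro μ
    rw [transpose_mul, hCt, Matrix.mul_neg, ← hCΓ μ]
  -- symmetry of C Γ μ Γ ν for μ ≠ ν
  have hCGGsym : ∀ a b, a ≠ b → (Cm * (Γ a * Γ b))ᵀ = Cm * (Γ a * Γ b) := by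
    intro a b hab
    rw [transpose_mul, transpose_mul, hCt, Matrix.mul_neg, mul_assoc, ← hCΓ a,
      ← mul_assoc, ← hCΓ b, mul_assoc, ganti Γ hC (Ne.symm hab), Matrix.mul_neg, neg_neg]
  have hXt : Xᵀ = -X := by
    rw [hX, transpose_sub, vecMulVec_transp, vecMulVec_transp, neg_sub]
  -- kappaLow as matrix element
  have hκval : ∀ μ, κ μ = 2 * (u ⬝ᵥ (Cm * Γ μ) *ᵥ v) := by
    intro μ
    rw [hκ]
    simp only [kappaLow, bilM, Fin.sum_univ_two, eps2]
    norm_num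
    rw [← hu, ← hv, antisym_bil (hCG μ) u v]
    ring
  -- muS
  have hmu : muS Cm s = 2 * m := by
    simp only [muS, bil, Fin.sum_univ_two, eps2]
    norm_num
    rw [← hu, ← hv, antisym_bil hCt u v, ← hm]
    ring
  -- trace N
  have k0 : trace N = 2 * m := by
    rw [hN, hX, sub_mul, trace_sub, trace_mul_comm, trace_mul_comm _ Cm,
      trace_mul_vecMulVec, trace_mul_vecMulVec, antisym_bil hCt u v, ← hm]
    ring
  -- trace (Γ μ * N)
  have k1 : ∀ μ, trace (Γ μ * N) = κ μ := by
    intro μ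
    rw [hN, ← mul_assoc, trace_mul_comm, ← mul_assoc, hX, mul_sub, trace_sub,
      trace_mul_vecMulVec, trace_mul_vecMulVec, antisym_bil (hCG μ) u v, hκval μ]
    ring
  -- trace (Γ a * Γ b * N) = 0
  have k2 : ∀ a b, a ≠ b → trace (Γ a * Γ b * N) = 0 := by
    intro a b hab
    rw [hN, ← mul_assoc, trace_mul_comm, ← mul_assoc]
    exact trace_sym_antisym (hCGGsym a b hab) hXt
  -- N² = m N
  have hNN : N * N = m • N := by
    have hXCX : X * Cm * X = m • X := by
      rw [hX]
      simp only [sub_mul, mul_sub, vecMulVec_sandwich, antisym_bil_self hCt,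
        antisym_bil hCt u v, zero_smul, neg_smul, ← hm]
      module
    rw [hN, ← mul_assoc, mul_assoc (X * Cm), ← hN]
    rw [show X * Cm * (X * Cm) = (X * Cm * X) * Cm by noncomm_ring, hXCX,
      smul_mul_assoc, hN]
  -- expansion coefficients
  set c : Fin 5 → ℂ := fun μ => eta μ μ * κ μ / 4 with hc
  set S := ∑ μ, c μ • Γ μ with hS
  have hNform : N = (m / 2) • 1 + S := by
    rw [← sub_eq_zero]
    apply matrix_eq_zero_of_traces Γ hC
    · rw [trace_sub, trace_add, trace_smul, trace_one, trace_sum]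
      simp only [trace_smul, trG Γ hC, smul_zero, Finset.sum_const_zero, smul_eq_mul]
      rw [k0]
      simp only [Fintype.card_fin, Nat.cast_ofNat]
      ring
      simp
    · intro μ
      rw [mul_sub, mul_add, trace_sub, trace_add, Matrix.mul_smul, mul_one, trace_smul,
        trG Γ hC, smul_zero, hS, Matrix.mul_sum, trace_sum]
      simp only [Matrix.mul_smul, trace_smul, smul_eq_mul]
      rw [k1 μ]
      have : ∀ ν ∈ Finset.univ, ν ≠ μ → c ν * trace (Γ μ * Γ ν) = 0 := by
        intro ν _ hν
        rw [trGG Γ hC, eta_off (Ne.symm hν)]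
        ring
      rw [Finset.sum_eq_single μ this (by simp), trGG Γ hC]
      simp only [hc]
      have h2 := eta_diag_sq μ
      linear_combination (-κ μ) * h2
    · rintro ⟨⟨a, b⟩, hab⟩
      have hab' : a ≠ b := ne_of_lt hab
      simp only
      rw [mul_sub, mul_add, trace_sub, trace_add, Matrix.mul_smul, mul_one, trace_smul,
        trGG Γ hC, eta_off hab', hS, Matrix.mul_sum, trace_sum]
      simp only [Matrix.mul_smul, trace_smul, smul_eq_mul]
      rw [k2 a b hab']
      have : ∀ ν ∈ Finset.univ, c ν * trace (Γ a * Γ b * Γ ν) = 0 := by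
        intro ν _
        rw [trG3' Γ hC ν hab', mul_zero]
      rw [Finset.sum_eq_zero this]
      ring
  -- S² from hNN
  have hSS : S * S = (m ^ 2 / 4) • (1 : Matrix (Fin 4) (Fin 4) ℂ) := by
    have h := hNN
    rw [hNform] at h
    rw [add_mul, mul_add, mul_add, smul_add] at h
    simp only [smul_mul_assoc, mul_smul_comm, one_mul, mul_one, smul_smul] at h
    have h2 : S * S = (m * (m / 2)) • (1 : Matrix (Fin 4) (Fin 4) ℂ) + m • S -
        ((m / 2 * (m / 2)) • (1 : Matrix (Fin 4) (Fin 4) ℂ) + (m / 2) • S + (m / 2) • S) := by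
      rw [← h]; abel
    rw [h2]; module
  -- S² as scalar
  have hSS2 : S * S = (∑ μ, c μ * c μ * eta μ μ) • (1 : Matrix (Fin 4) (Fin 4) ℂ) := by
    have e1 : (2:ℂ) • (S * S) = (∑ μ, 2 * (c μ * c μ * eta μ μ)) • (1 : Matrix (Fin 4) (Fin 4) ℂ) := by
      have expand : S * S = ∑ μ, ∑ ν, (c μ * c ν) • (Γ μ * Γ ν) := by
        rw [hS, Finset.sum_mul_sum]
        refine Finset.sum_congr rfl fun μ _ => ?_
        refine Finset.sum_congr rfl fun ν _ => ?_
        rw [smul_mul_assoc, mul_smul_comm, smul_smul]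
      have expand2 : S * S = ∑ μ, ∑ ν, (c μ * c ν) • (Γ ν * Γ μ) := by
        rw [expand, Finset.sum_comm]
        refine Finset.sum_congr rfl fun μ _ => ?_
        refine Finset.sum_congr rfl fun ν _ => ?_
        rw [mul_comm (c ν)]
      calc (2:ℂ) • (S * S) = S * S + S * S := two_smul ℂ _
        _ = ∑ μ, ∑ ν, (c μ * c ν) • (Γ μ * Γ ν + Γ ν * Γ μ) := by
            nth_rewrite 1 [expand]
            nth_rewrite 1 [expand2]
            rw [← Finset.sum_add_distrib]
            refine Finset.sum_congr rfl fun μ _ => ?_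
            rw [← Finset.sum_add_distrib]
            refine Finset.sum_congr rfl fun ν _ => ?_
            rw [smul_add]
        _ = ∑ μ, ∑ ν, (c μ * c ν) • ((2 * eta μ ν) • (1 : Matrix (Fin 4) (Fin 4) ℂ)) := by
            refine Finset.sum_congr rfl fun μ _ => ?_
            refine Finset.sum_congr rfl fun ν _ => ?_
            rw [hC]
        _ = ∑ μ, (2 * (c μ * c μ * eta μ μ)) • (1 : Matrix (Fin 4) (Fin 4) ℂ) := by
            refine Finset.sum_congr rfl fun μ _ => ?_
            rw [Finset.sum_eq_single μ]
            · rw [smul_smul]; congr 1; ring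
            · intro ν _ hν
              rw [eta_off (Ne.symm hν)]
              simp
            · simp
        _ = (∑ μ, 2 * (c μ * c μ * eta μ μ)) • (1 : Matrix (Fin 4) (Fin 4) ℂ) := by
            rw [Finset.sum_smul]
    have e2 : (∑ μ, 2 * (c μ * c μ * eta μ μ)) = 2 * ∑ μ, c μ * c μ * eta μ μ := by
      rw [Finset.mul_sum]
    rw [e2, mul_smul] at e1
    exact smul_right_injective _ (by norm_num : (2:ℂ) ≠ 0) e1
  -- scalar identity
  have hval : (∑ μ, c μ * c μ * eta μ μ) = m ^ 2 / 4 := by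
    have h12 := hSS2.symm.trans hSS
    have := congrArg (fun M => M 0 0) h12
    simpa using this
  -- conclude
  have hfinal : ∑ μ, eta μ μ * κ μ * κ μ = 4 * m ^ 2 := by
    have step : ∀ μ, c μ * c μ * eta μ μ = eta μ μ * κ μ * κ μ / 16 := by
      intro μ
      simp only [hc]
      have h2 := eta_diag_sq μ
      linear_combination (eta μ μ * κ μ * κ μ / 16) * h2
    rw [Finset.sum_congr rfl (fun μ _ => step μ)] at hval
    rw [← Finset.sum_div] at hval
    field_simp at hval
    linear_combination hval / 4 + (Finset.sum_congr rfl (fun μ _ => by ring) :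
      ∑ μ, eta μ μ * κ μ * κ μ = ∑ x, eta x x * κ x ^ 2)
  simp only [kappaUp, ← hκ]
  rw [hmu]
  calc ∑ μ, eta μ μ * κ μ * κ μ = 4 * m ^ 2 := hfinal
    _ = (2 * m) ^ 2 := by ring
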